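/- Let K be an infinite field and n, d integers with d ≥ 2 and n − d ≥ d. For every f ∈ S = K[x_1,…,x_{n−1}] and every m ≥ 1, one has f · x_n^m ∈ S + I^Sp_{(n−d,d)} (sum inside R = K[x_1,…,x_n]) if and only if f ∈ I^Sp_{(n−d,d−1)}, the Specht ideal of S for the partition (n−d, d−1) of n−1. -/

import Mathlib

open MvPolynomial

/-- A Young tableau of two-row shape `(a, b)` (with `b ≤ a`) filled bijectively with
the letters of `S ⊆ Fin n`.  `top` is the first row, `bot` the second row. -/
structure TwoRowTab (n a b : ℕ) (S : Finset (Fin n)) where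
  hba : b ≤ a
  top : Fin a → Fin n
  bot : Fin b → Fin n
  inj : Function.Injective (Sum.elim top bot)
  range_eq : ∀ s : Fin n, s ∈ S ↔ ∃ x, Sum.elim top bot x = s

/-- The Specht polynomial of a two-row tableau: the product over the two-box columns
`k` of `x_{top k} - x_{bot k}`. -/
noncomputable def spechtPoly (K : Type) [Field K] {n a b : ℕ} {S : Finset (Fin n)}
    (T : TwoRowTab n a b S) : MvPolynomial (Fin n) K :=
  ∏ k : Fin b, (X (T.top (Fin.castLE T.hba k)) - X (T.bot k))

/-- The Specht ideal of the two-row shape `(a, b)` in `K[x_1, …, x_n]`. -/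
noncomputable def spechtIdeal (K : Type) [Field K] (n a b : ℕ) :
    Ideal (MvPolynomial (Fin n) K) :=
  Ideal.span (Set.range (fun T : TwoRowTab n a b Finset.univ => spechtPoly K T))

/-- A Young tableau of three-row shape `(e, e, 1)` filled bijectively with the letters
of `S ⊆ Fin n`; `low` is the unique box of the third row. -/
structure ThreeRowTab (n e : ℕ) (S : Finset (Fin n)) where
  he : 0 < e
  top : Fin e → Fin n
  mid : Fin e → Fin n
  low : Fin n
  inj : Function.Injective (Sum.elim (Sum.elim top mid) (fun _ : Unit => low))
  range_eq : ∀ s : Fin n, s ∈ S ↔ ∃ x, Sum.elim (Sum.elim top mid) (fun _ : Unit => low) x = s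

/-- The Specht polynomial of a tableau of shape `(e, e, 1)`. -/
noncomputable def spechtPoly3 (K : Type) [Field K] {n e : ℕ} {S : Finset (Fin n)}
    (T : ThreeRowTab n e S) : MvPolynomial (Fin n) K :=
  (∏ k : Fin e, (X (T.top k) - X (T.mid k))) *
    ((X (T.top ⟨0, T.he⟩) - X T.low) * (X (T.mid ⟨0, T.he⟩) - X T.low))

/-- The Specht ideal of the shape `(e, e, 1)` in `K[x_1, …, x_n]`. -/
noncomputable def spechtIdeal3 (K : Type) [Field K] (n e : ℕ) :
    Ideal (MvPolynomial (Fin n) K) :=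
  Ideal.span (Set.range (fun T : ThreeRowTab n e Finset.univ => spechtPoly3 K T))

/-- The Hilbert function of `R/I`: the `K`-dimension of the image of the space of
homogeneous polynomials of degree `j` in `R ⧸ I`. -/
noncomputable def hilb (K : Type) [Field K] {n : ℕ} (I : Ideal (MvPolynomial (Fin n) K))
    (j : ℕ) : ℕ :=
  Module.finrank K (Submodule.map (Ideal.Quotient.mkₐ K I).toLinearMap
    (homogeneousSubmodule (Fin n) K j))

/-- The strict lexicographic order on monomial exponents with `x_n ≻ x_{n-1} ≻ ⋯ ≻ x_1`:
`m₁ ≺ m₂` iff at the largest index where they differ, `m₂` has the larger exponent. -/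
def lexLt {n : ℕ} (m₁ m₂ : Fin n →₀ ℕ) : Prop :=
  Finsupp.Lex (fun i j : Fin n => j < i) (· < ·) m₁ m₂

/-- `m` is the initial (leading) monomial exponent of `f` for the lexicographic
order with `x_n ≻ ⋯ ≻ x_1`. -/
def IsInitMonomial {K : Type} [Field K] {n : ℕ} (f : MvPolynomial (Fin n) K)
    (m : Fin n →₀ ℕ) : Prop :=
  m ∈ f.support ∧ ∀ m' ∈ f.support, m' ≠ m → lexLt m' m

/-- The trimmed form of `f`: the sum of the terms of `f` whose monomial is not divisible
by any squarefree monomial of degree `d+1`, i.e. whose support has at most `d` elements. -/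
noncomputable def trm {K : Type} [Field K] {n : ℕ} (d : ℕ) (f : MvPolynomial (Fin n) K) :
    MvPolynomial (Fin n) K :=
  ∑ m ∈ f.support, if m.support.card ≤ d then monomial m (coeff m f) else 0

/-! Both Specht ideals are generated by products `∏ (x_p - x_q)` over pairwise disjoint pairs
of letters. A generator of the ideal of shape `(a, b + 1)` has at most one factor involving
`x_n`, and its other `b` factors form a generator of the ideal `J` of shape `(a, b)` in `S`; so
modulo `J` the relation `f x_n^m = s + g` becomes an identity of polynomials in `x_n` over
`S ⧸ J`, whose coefficient of `x_n^m` (`m ≥ 1`) says `f ∈ J`. Conversely, for a tableau `T` of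
shape `(a, b)` the letter `j` in box `b + 1` of its first row lies in no column, so
`f_T (x_j - x_n)` is a Specht polynomial of shape `(a, b + 1)`, and
`f_T x_n^(m+1) ≡ (f_T x_j) x_n^m` lets an induction on `m` run over the ideal `J`. -/

open Function

theorem exists_equiv_apply_eq_of_injective {γ α β : Type*} [Finite α] {ι : γ → α} {P : γ → β}
    (hι : Injective ι) (hP : Injective P) (h : Nonempty (α ≃ β)) :
    ∃ e : α ≃ β, ∀ x, e (ι x) = P x := by
  let f : Set.range ι ↪ β := ⟨P ∘ (Equiv.ofInjective ι hι).symm, hP.comp (Equiv.injective _)⟩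
  obtain ⟨e, he⟩ := Cardinal.extend_function_finite f h
  refine ⟨e, fun x => ?_⟩
  simpa [f] using he ⟨ι x, x, rfl⟩

noncomputable def pairProd {R σ : Type*} [CommRing R] {b : ℕ} (p q : Fin b → σ) :
    MvPolynomial σ R :=
  ∏ k, (X (p k) - X (q k))

theorem spechtPoly_eq_pairProd (K : Type) [Field K] {n a b : ℕ} {S : Finset (Fin n)}
    (T : TwoRowTab n a b S) : spechtPoly K T = pairProd (T.top ∘ Fin.castLE T.hba) T.bot :=
  rfl

theorem rename_pairProd {R σ τ : Type*} [CommRing R] {b : ℕ} (e : σ → τ) (p q : Fin b → σ) :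
    rename e (pairProd p q : MvPolynomial σ R) = pairProd (e ∘ p) (e ∘ q) := by
  simp [pairProd, map_prod]

def TwoRowTab.ofEquiv {n a b : ℕ} (hba : b ≤ a) (e : Fin a ⊕ Fin b ≃ Fin n) :
    TwoRowTab n a b Finset.univ where
  hba := hba
  top := e ∘ Sum.inl
  bot := e ∘ Sum.inr
  inj := by rw [Sum.elim_comp_inl_inr]; exact e.injective
  range_eq s := by simpa [Sum.elim_comp_inl_inr] using e.surjective s

theorem pairProd_mem_spechtIdeal (K : Type) [Field K] {n a b : ℕ} (hba : b ≤ a)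
    (hab : a + b = n) {p q : Fin b → Fin n} (hpq : Injective (Sum.elim p q)) :
    pairProd p q ∈ spechtIdeal K n a b := by
  obtain ⟨e, he⟩ := exists_equiv_apply_eq_of_injective
    (Sum.map_injective.2 ⟨Fin.castLE_injective hba, injective_id⟩) hpq
    ⟨(finSumFinEquiv.trans (finCongr hab))⟩
  refine Ideal.subset_span ⟨TwoRowTab.ofEquiv hba e, ?_⟩
  simp only [spechtPoly_eq_pairProd, TwoRowTab.ofEquiv]
  congr 1 <;> ext1 k
  · exact he (Sum.inl k)
  · exact he (Sum.inr k)

theorem TwoRowTab.injective_sumElim_castLE {n a b c : ℕ} {S : Finset (Fin n)}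
    (T : TwoRowTab n a b S) (hca : c ≤ a) : Injective (Sum.elim (T.top ∘ Fin.castLE hca) T.bot) :=
  Sum.elim_comp_map (g₁ := id) ▸
    T.inj.comp (Sum.map_injective.2 ⟨Fin.castLE_injective hca, injective_id⟩)

theorem exists_forall_ne_of_injective_sumElim {ι β : Type*} [Nonempty ι] {p q : ι → β}
    (hpq : Injective (Sum.elim p q)) (z : β) : ∃ k₀, ∀ k ≠ k₀, p k ≠ z ∧ q k ≠ z := by
  by_cases hz : z ∈ Set.range (Sum.elim p q)
  · obtain ⟨x, rfl⟩ := hz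
    refine ⟨Sum.elim id id x, fun k hk => ⟨fun h => hk ?_, fun h => hk ?_⟩⟩
    · rw [← hpq (a₁ := Sum.inl k) h]; rfl
    · rw [← hpq (a₁ := Sum.inr k) h]; rfl
  · exact ⟨Classical.arbitrary ι, fun k _ =>
      ⟨fun h => hz ⟨Sum.inl k, h⟩, fun h => hz ⟨Sum.inr k, h⟩⟩⟩

theorem pairProd_mem_map_rename_castSucc (K : Type) [Field K] {N a b : ℕ} (hba : b ≤ a)
    (hab : a + b = N) {p q : Fin (b + 1) → Fin (N + 1)} (hpq : Injective (Sum.elim p q)) :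
    pairProd p q ∈ (spechtIdeal K N a b).map (rename Fin.castSucc) := by
  obtain ⟨k₀, hk₀⟩ := exists_forall_ne_of_injective_sumElim hpq (Fin.last N)
  let p' : Fin b → Fin N := fun i => (p (k₀.succAbove i)).castPred (hk₀ _ (k₀.succAbove_ne i)).1
  let q' : Fin b → Fin N := fun i => (q (k₀.succAbove i)).castPred (hk₀ _ (k₀.succAbove_ne i)).2
  have hp' : Fin.castSucc ∘ p' = p ∘ k₀.succAbove := funext fun i => Fin.castSucc_castPred _ _
  have hq' : Fin.castSucc ∘ q' = q ∘ k₀.succAbove := funext fun i => Fin.castSucc_castPred _ _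
  have hpq' : Injective (Sum.elim p' q') := by
    refine Injective.of_comp (f := Fin.castSucc) ?_
    rw [Sum.comp_elim, hp', hq', ← Sum.elim_comp_map]
    exact hpq.comp
      (Sum.map_injective.2 ⟨Fin.succAbove_right_injective, Fin.succAbove_right_injective⟩)
  have hsplit : pairProd p q =
      (X (p k₀) - X (q k₀)) * rename Fin.castSucc (pairProd p' q' : MvPolynomial _ K) := by
    rw [rename_pairProd, hp', hq']
    exact Fin.prod_univ_succAbove _ k₀
  rw [hsplit]
  exact Ideal.mul_mem_left _ _ (Ideal.mem_map_of_mem _ (pairProd_mem_spechtIdeal K hba hab hpq'))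

theorem spechtIdeal_le_map_rename_castSucc (K : Type) [Field K] {N a b : ℕ} (hab : a + b = N) :
    spechtIdeal K (N + 1) a (b + 1) ≤ (spechtIdeal K N a b).map (rename Fin.castSucc) := by
  refine Ideal.span_le.2 ?_
  rintro _ ⟨T, rfl⟩
  exact pairProd_mem_map_rename_castSucc K (by have := T.hba; omega) hab
    (T.injective_sumElim_castLE T.hba)

def mulMemRangeAdd {A B : Type*} [CommRing A] [CommRing B] (φ : A →+* B) (I : Ideal B) (x : B) :
    Ideal A where
  carrier := {f | ∃ s g, g ∈ I ∧ φ f * x = φ s + g}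
  zero_mem' := ⟨0, 0, I.zero_mem, by simp⟩
  add_mem' := by
    rintro f₁ f₂ ⟨s₁, g₁, hg₁, e₁⟩ ⟨s₂, g₂, hg₂, e₂⟩
    exact ⟨s₁ + s₂, g₁ + g₂, I.add_mem hg₁ hg₂, by rw [map_add, add_mul, e₁, e₂, map_add]; ring⟩
  smul_mem' := by
    rintro t f ⟨s, g, hg, e⟩
    refine ⟨t * s, φ t * g, I.mul_mem_left _ hg, ?_⟩
    rw [smul_eq_mul, map_mul, mul_assoc, e, map_mul, mul_add]

theorem mulMemRangeAdd_mono {A B : Type*} [CommRing A] [CommRing B] (φ : A →+* B) {I J : Ideal B}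
    (hIJ : I ≤ J) (x : B) : mulMemRangeAdd φ I x ≤ mulMemRangeAdd φ J x :=
  fun _ ⟨s, g, hg, e⟩ => ⟨s, g, hIJ hg, e⟩

theorem mulMemRangeAdd_map_rename_castSucc_le {R : Type*} [CommRing R] {N m : ℕ} (hm : m ≠ 0)
    (J : Ideal (MvPolynomial (Fin N) R)) :
    mulMemRangeAdd (rename Fin.castSucc).toRingHom (J.map (rename Fin.castSucc))
      (X (Fin.last N) ^ m) ≤ J := by
  rintro f ⟨s, g, hg, h⟩
  let ρ : MvPolynomial (Fin (N + 1)) R →+* Polynomial (MvPolynomial (Fin N) R ⧸ J) :=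
    eval₂Hom (Polynomial.C.comp ((Ideal.Quotient.mk J).comp C))
      (Fin.lastCases Polynomial.X fun i => Polynomial.C (Ideal.Quotient.mk J (X i)))
  have hρ : ∀ t, ρ (rename Fin.castSucc t) = Polynomial.C (Ideal.Quotient.mk J t) := by
    suffices ρ.comp (rename Fin.castSucc).toRingHom = Polynomial.C.comp (Ideal.Quotient.mk J) from
      fun t => RingHom.congr_fun this t
    ext <;> simp [ρ]
  have hρX : ρ (X (Fin.last N)) = Polynomial.X := by simp [ρ]
  have hρg : ρ g = 0 := by
    refine (Ideal.map_le_iff_le_comap.2 fun t ht => ?_ : _ ≤ RingHom.ker ρ) hg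
    simp [hρ, Ideal.Quotient.eq_zero_iff_mem.2 ht]
  have hcoeff := congrArg (fun P => Polynomial.coeff (ρ P) m) h
  simp only [AlgHom.toRingHom_eq_coe, RingHom.coe_coe, map_mul, map_add, map_pow, hρ, hρX, hρg,
    add_zero, Polynomial.coeff_C_mul_X_pow, if_pos, Polynomial.coeff_C, if_neg hm] at hcoeff
  exact Ideal.Quotient.eq_zero_iff_mem.1 hcoeff

theorem injective_sumElim_castSucc_snoc_last {N b c : ℕ} {u : Fin c → Fin N} {v : Fin b → Fin N}
    (huv : Injective (Sum.elim u v)) :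
    Injective (Sum.elim (Fin.castSucc ∘ u)
      (Fin.snoc (Fin.castSucc ∘ v) (Fin.last N) : Fin (b + 1) → Fin (N + 1))) := by
  refine Injective.sumElim ((Fin.castSucc_injective N).comp (huv.comp Sum.inl_injective))
    (Fin.snoc_injective_of_injective
      ((Fin.castSucc_injective N).comp (huv.comp Sum.inr_injective)) ?_) fun i j => ?_
  · rintro ⟨j, hj⟩
    exact Fin.castSucc_ne_last _ hj
  · induction j using Fin.lastCases with
    | last => simp
    | cast j => simpa using huv.ne (Sum.inl_ne_inr (a := i) (b := j))

theorem spechtIdeal_le_mulMemRangeAdd (K : Type) [Field K] {N a b : ℕ} (hba : b + 1 ≤ a)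
    (hab : a + b = N) (m : ℕ) :
    spechtIdeal K N a b ≤ mulMemRangeAdd (rename Fin.castSucc).toRingHom
      (spechtIdeal K (N + 1) a (b + 1)) (X (Fin.last N) ^ m) := by
  induction m with
  | zero => exact fun f _ => ⟨f, 0, Ideal.zero_mem _, by simp⟩
  | succ m ih =>
    refine Ideal.span_le.2 ?_
    rintro _ ⟨T, rfl⟩
    set u := T.top ∘ Fin.castLE hba
    have hcol : pairProd (Fin.castSucc ∘ u) (Fin.snoc (Fin.castSucc ∘ T.bot) (Fin.last N)) =
        rename Fin.castSucc (spechtPoly K T) *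
          (X (Fin.castSucc (u (Fin.last b))) - X (Fin.last N)) := by
      rw [spechtPoly_eq_pairProd, rename_pairProd]
      simp only [pairProd, Fin.prod_univ_castSucc, Fin.snoc_castSucc, Fin.snoc_last, comp_apply]
      rfl
    have hmem := pairProd_mem_spechtIdeal K hba (by omega)
      (injective_sumElim_castSucc_snoc_last (T.injective_sumElim_castLE hba))
    rw [hcol] at hmem
    obtain ⟨s, g, hg, e⟩ :=
      ih (Ideal.mul_mem_right (X (u (Fin.last b))) _ (Ideal.subset_span ⟨T, rfl⟩))
    refine ⟨s, g - _ * X (Fin.last N) ^ m, sub_mem hg (Ideal.mul_mem_right _ _ hmem), ?_⟩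
    simp only [AlgHom.toRingHom_eq_coe, RingHom.coe_coe, map_mul, rename_X] at e ⊢
    linear_combination e

theorem mulMemRangeAdd_spechtIdeal (K : Type) [Field K] {N a b m : ℕ} (hba : b + 1 ≤ a)
    (hab : a + b = N) (hm : m ≠ 0) :
    mulMemRangeAdd (rename Fin.castSucc).toRingHom (spechtIdeal K (N + 1) a (b + 1))
      (X (Fin.last N) ^ m) = spechtIdeal K N a b :=
  le_antisymm
    ((mulMemRangeAdd_mono _ (spechtIdeal_le_map_rename_castSucc K hab) _).trans
      (mulMemRangeAdd_map_rename_castSucc_le hm _))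
    (spechtIdeal_le_mulMemRangeAdd K hba hab m)

/-- over an infinite field, for `d ≥ 2`, `n - d ≥ d`, `f ∈ S` and `m ≥ 1`:
`f ⬝ x_n^m ∈ S + I^Sp_{(n-d,d)}` (sum inside `R = K[x_1, …, x_n]`) iff
`f ∈ I^Sp_{(n-d,d-1)}`, the Specht ideal of `S = K[x_1, …, x_{n-1}]`. -/
theorem mul_xn_pow_mem_iff (K : Type) [Field K] (n d : ℕ)
    (h1 : 2 ≤ d) (h2 : d ≤ n - d) (f : MvPolynomial (Fin (n - 1)) K) (m : ℕ)
    (hm : 1 ≤ m) :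
    (∃ (s : MvPolynomial (Fin (n - 1)) K) (g : MvPolynomial (Fin n) K),
        g ∈ spechtIdeal K n (n - d) d ∧
          MvPolynomial.rename (Fin.castLE (n.sub_le 1)) f
              * X (⟨n - 1, by omega⟩ : Fin n) ^ m
            = MvPolynomial.rename (Fin.castLE (n.sub_le 1)) s + g)
      ↔ f ∈ spechtIdeal K (n - 1) (n - d) (d - 1) := by
  obtain ⟨N, rfl⟩ : ∃ N, n = N + 1 := ⟨n - 1, by omega⟩
  obtain ⟨b, rfl⟩ : ∃ b, d = b + 1 := ⟨d - 1, by omega⟩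
  -- once `n = N + 1`, `Fin (n - 1)` is `Fin N` and `Fin.castLE` is `Fin.castSucc` definitionally
  change f ∈ mulMemRangeAdd (rename Fin.castSucc).toRingHom
      (spechtIdeal K (N + 1) (N + 1 - (b + 1)) (b + 1)) (X (Fin.last N) ^ m) ↔
    f ∈ spechtIdeal K N (N + 1 - (b + 1)) b
  rw [mulMemRangeAdd_spechtIdeal K (by omega) (by omega) (by omega)]
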